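/- arXiv:math/0702487 — 3 statements merged into one kernel-verified Lean document; each statement's English description precedes it below -/
import Mathlib

section
/- Let $f \in k[[x_1,\dots,x_n]]$ be a nonzero formal power series. Then the function $w \mapsto \nu_w(f)$ on $\mathbb{R}_{\ge 0}^n$, where $\nu_w(\sum_\alpha a_\alpha x^\alpha) = \min\{w\cdot\alpha : a_\alpha \ne 0\}$, is concave, continuous, and on any compact subset is the minimum of finitely many linear functions $w \mapsto w\cdot\alpha$ with integer $\alpha$. -/
/-!
Dickson's lemma makes the set `S` of minimal exponents of `f` finite. For a nonnegative
weight `w`, the map `α ↦ w·α` is monotone for the coordinatewise order, so the infimum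
defining `ν_w(f)` is attained on `S`: `ν_w(f) = min_{α ∈ S} w·α` on the whole orthant.
A minimum of finitely many linear functions is concave and continuous.
-/

open Finset Set

noncomputable def mvalSeries {k : Type*} [Field k] {n : ℕ}
    (f : MvPowerSeries (Fin n) k) (w : Fin n → ℝ) : ℝ :=
  sInf {x : ℝ | ∃ α : Fin n →₀ ℕ, MvPowerSeries.coeff α f ≠ 0 ∧ x = ∑ i, w i * (α i : ℝ)}

section MinimalElements

variable {α β : Type*} [PartialOrder α] [WellQuasiOrderedLE α]

theorem Set.finite_setOf_minimal_mem (s : Set α) : {x | Minimal (· ∈ s) x}.Finite :=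
  WellQuasiOrderedLE.finite_of_isAntichain (setOfPred_minimal_antichain _)

theorem Monotone.csInf_image_eq_csInf_image_minimal [ConditionallyCompleteLinearOrder β]
    {g : α → β} (hg : Monotone g) {s : Set α} (hs : s.Nonempty) :
    sInf (g '' s) = sInf (g '' {x | Minimal (· ∈ s) x}) := by
  set M := {x | Minimal (· ∈ s) x}
  have hM : (g '' M).Finite := (Set.finite_setOf_minimal_mem s).image g
  have dominated : ∀ x ∈ s, sInf (g '' M) ≤ g x := fun x hx => by
    obtain ⟨m, hmx, hm⟩ := exists_minimal_le_of_wellFoundedLT (· ∈ s) x hx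
    exact (csInf_le hM.bddBelow ⟨m, hm, rfl⟩).trans (hg hmx)
  have hMne : (g '' M).Nonempty := by
    obtain ⟨x, hx⟩ := hs
    obtain ⟨m, -, hm⟩ := exists_minimal_le_of_wellFoundedLT (· ∈ s) x hx
    exact ⟨g m, m, hm, rfl⟩
  refine le_antisymm ?_ (le_csInf (hs.image g) ?_)
  · exact csInf_le_csInf ⟨_, forall_mem_image.2 dominated⟩ hMne
      (image_mono fun _ hm => hm.prop)
  · exact forall_mem_image.2 dominated

end MinimalElements

theorem ConcaveOn.finset_inf' {ι 𝕜 E β : Type*} [Semiring 𝕜] [PartialOrder 𝕜] [AddCommMonoid E]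
    [LinearOrder β] [AddCommMonoid β] [IsOrderedAddMonoid β] [SMul 𝕜 E] [Module 𝕜 β]
    [PosSMulStrictMono 𝕜 β] {s : Set E} {t : Finset ι} (ht : t.Nonempty) {f : ι → E → β}
    (hf : ∀ i ∈ t, ConcaveOn 𝕜 s (f i)) : ConcaveOn 𝕜 s (t.inf' ht f) :=
  inf'_induction ht f (fun _ hg _ hh => hg.inf hh) hf

section MonomialValuation

variable {k : Type*} [Field k] {n : ℕ}

def monomialWeight (w : Fin n → ℝ) (α : Fin n →₀ ℕ) : ℝ :=
  ∑ i, w i * (α i : ℝ)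

theorem monotone_monomialWeight {w : Fin n → ℝ} (hw : ∀ i, 0 ≤ w i) :
    Monotone (monomialWeight w) := fun _ _ hαβ =>
  sum_le_sum fun i _ => mul_le_mul_of_nonneg_left (Nat.cast_le.2 (hαβ i)) (hw i)

theorem concaveOn_monomialWeight (α : Fin n →₀ ℕ) :
    ConcaveOn ℝ univ (monomialWeight · α) := by
  refine ⟨convex_univ, fun x _ y _ a b _ _ _ => le_of_eq ?_⟩
  simp only [monomialWeight, smul_eq_mul, Pi.add_apply, Pi.smul_apply, mul_sum,
    ← sum_add_distrib]
  exact sum_congr rfl fun i _ => by ring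

theorem continuous_monomialWeight (α : Fin n →₀ ℕ) : Continuous (monomialWeight · α) := by
  unfold monomialWeight
  fun_prop

theorem mvalSeries_eq_sInf_image (f : MvPowerSeries (Fin n) k) (w : Fin n → ℝ) :
    mvalSeries f w = sInf (monomialWeight w '' {α | MvPowerSeries.coeff α f ≠ 0}) := by
  simp only [mvalSeries, monomialWeight, Set.image, Set.mem_ofPred_eq, eq_comm]

noncomputable def minExponents (f : MvPowerSeries (Fin n) k) : Finset (Fin n →₀ ℕ) :=
  (Set.finite_setOf_minimal_mem {α | MvPowerSeries.coeff α f ≠ 0}).toFinset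

theorem coeff_ne_zero_of_mem_minExponents {f : MvPowerSeries (Fin n) k} {α : Fin n →₀ ℕ}
    (hα : α ∈ minExponents f) : MvPowerSeries.coeff α f ≠ 0 :=
  ((Set.Finite.mem_toFinset _).1 hα).prop

theorem minExponents_nonempty {f : MvPowerSeries (Fin n) k} (hf : f ≠ 0) :
    (minExponents f).Nonempty := by
  obtain ⟨α, hα⟩ : ∃ α, MvPowerSeries.coeff α f ≠ 0 := by
    by_contra! h
    exact hf (MvPowerSeries.ext h)
  obtain ⟨m, -, hm⟩ := exists_minimal_le_of_wellFoundedLT (MvPowerSeries.coeff · f ≠ 0) α hα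
  exact ⟨m, (Set.Finite.mem_toFinset _).2 hm⟩

theorem mvalSeries_eq_sInf_image_minExponents {f : MvPowerSeries (Fin n) k} (hf : f ≠ 0)
    {w : Fin n → ℝ} (hw : ∀ i, 0 ≤ w i) :
    mvalSeries f w = sInf (monomialWeight w '' (minExponents f : Set (Fin n →₀ ℕ))) := by
  obtain ⟨α, hα⟩ := minExponents_nonempty hf
  rw [mvalSeries_eq_sInf_image, minExponents, Set.Finite.coe_toFinset]
  exact (monotone_monomialWeight hw).csInf_image_eq_csInf_image_minimal
    ⟨α, coeff_ne_zero_of_mem_minExponents hα⟩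

theorem eqOn_mvalSeries_inf'_minExponents {f : MvPowerSeries (Fin n) k} (hf : f ≠ 0) :
    EqOn (mvalSeries f)
      ((minExponents f).inf' (minExponents_nonempty hf) fun α w => monomialWeight w α)
      {w | ∀ i, 0 ≤ w i} := fun w hw => by
  rw [mvalSeries_eq_sInf_image_minExponents hf hw, Finset.inf'_apply, inf'_eq_csInf_image]

end MonomialValuation

/-- for a nonzero formal power series `f`, the function
`w ↦ ν_w(f)` on the nonnegative orthant is concave, continuous, and on every
compact subset it is the minimum of finitely many linear functions `w ↦ w·α`
with `α` in the support of `f`. -/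
theorem stmt_2 {k : Type*} [Field k] {n : ℕ} (f : MvPowerSeries (Fin n) k)
    (hf : f ≠ 0) :
    (∀ w w' : Fin n → ℝ, (∀ i, 0 ≤ w i) → (∀ i, 0 ≤ w' i) →
      ∀ t : ℝ, 0 ≤ t → t ≤ 1 →
        t * mvalSeries f w + (1 - t) * mvalSeries f w' ≤
          mvalSeries f (fun i => t * w i + (1 - t) * w' i)) ∧
    ContinuousOn (mvalSeries f) {w : Fin n → ℝ | ∀ i, 0 ≤ w i} ∧
    (∀ K : Set (Fin n → ℝ), IsCompact K → K ⊆ {w | ∀ i, 0 ≤ w i} →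
      ∃ S : Finset (Fin n →₀ ℕ), S.Nonempty ∧
        (∀ α ∈ S, MvPowerSeries.coeff α f ≠ 0) ∧
        ∀ w ∈ K, mvalSeries f w =
          sInf ((fun α : Fin n →₀ ℕ => ∑ i, w i * (α i : ℝ)) '' (S : Set (Fin n →₀ ℕ)))) := by
  have hS := minExponents_nonempty hf
  have hmin := eqOn_mvalSeries_inf'_minExponents hf
  have hconcave : ConcaveOn ℝ {w : Fin n → ℝ | ∀ i, 0 ≤ w i} (mvalSeries f) :=
    ((ConcaveOn.finset_inf' hS fun α _ => concaveOn_monomialWeight α).subset (subset_univ _)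
      (convex_Ici 0)).congr hmin.symm
  have hcont : Continuous ((minExponents f).inf' hS fun α w => monomialWeight w α) :=
    Continuous.finset_inf' hS fun α _ => continuous_monomialWeight α
  exact ⟨fun w w' hw hw' t ht ht1 => hconcave.2 hw hw' ht (by linarith) (by ring),
    hcont.continuousOn.congr hmin, fun K _ hK => ⟨minExponents f, hS,
      fun α => coeff_ne_zero_of_mem_minExponents,
      fun w hw => mvalSeries_eq_sInf_image_minExponents hf (hK hw)⟩⟩
end

section
/- Let $u$ be a psh germ at $0 \in \mathbb{C}^n$ and $\varphi$ a maximal psh weight (a psh germ with isolated singularity at $0$, $e^\varphi$ continuous, and $(dd^c\varphi)^n = \lambda\delta_0$ for some $\lambda > 0$). Then the relative type $\sigma(u,\varphi) = \sup\{c \ge 0 : u \le c\varphi + O(1)\}$ is finite and the supremum is attained: $u \le \sigma(u,\varphi)\,\varphi + O(1)$. -/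
/-!
Fix `ρ < R` and let `ℓ t` be the supremum of `u` on `{‖z‖ ≤ ρ, φ z ≤ t}`. It is finite because
`u` is not `-∞` near `0` (by the sub-mean value inequality the interior of `{u = -∞}` is closed
in the ball). For `t` small these sublevel sets lie in a smaller ball, so a shell `t₀ < φ < t₁`
is relatively compact in the punctured ball and its frontier lies on the level sets `φ = t₀` and
`φ = t₁`. If `c t + β` majorizes `ℓ` at `t₀` and `t₁`, then `u ≤ c φ + β` on that frontier, and
maximality of `φ` against the psh function `(u - β) / c` gives it on the shell; hence `ℓ` is
convex. Being also nondecreasing, it has a slope `L ≥ 0` at `-∞`, and `ℓ t ≤ L t + O(1)`. This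
is the attained bound `u ≤ L φ + O(1)`, while `u ≤ c φ + O(1)` forces `ℓ t ≤ c t + O(1)`, i.e.
`c ≤ L`.
-/

open MeasureTheory

/-- Plurisubharmonicity (see `stmt_12`). -/
def IsPSHOn {n : ℕ} (u : (Fin n → ℂ) → EReal) (Ω : Set (Fin n → ℂ)) : Prop :=
  UpperSemicontinuousOn u Ω ∧
    ∀ a ∈ Ω, ∀ b : Fin n → ℂ,
      (∀ t : ℂ, ‖t‖ ≤ 1 → a + t • b ∈ Ω) →
      ∀ φ : ℝ → ℝ, Continuous φ →
        (∀ θ : ℝ, u (a + Complex.exp (θ * Complex.I) • b) ≤ ((φ θ : ℝ) : EReal)) →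
        u a ≤ (((1 / (2 * Real.pi)) * ∫ θ in (0:ℝ)..(2 * Real.pi), φ θ : ℝ) : EReal)

/-- `exp : ℝ ∪ {-∞} → ℝ` with `exp(-∞) = 0`. -/
noncomputable def expE (x : EReal) : ℝ := if x = ⊥ then 0 else Real.exp x.toReal

/-- A psh function is maximal on a set `S` if it dominates, on every relatively
compact open `ω ⊆ S`, any psh function on `ω` (usc up to the boundary) which it
dominates on `∂ω`. For locally bounded psh functions this is equivalent to the
vanishing of the Monge–Ampère measure `(dd^c φ)^n` on `S`. -/
def IsMaximalOn {n : ℕ} (φ : (Fin n → ℂ) → EReal) (S : Set (Fin n → ℂ)) : Prop :=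
  ∀ ω : Set (Fin n → ℂ), IsOpen ω → IsCompact (closure ω) → closure ω ⊆ S →
    ∀ v : (Fin n → ℂ) → EReal, IsPSHOn v ω →
      UpperSemicontinuousOn v (closure ω) →
      (∀ z ∈ frontier ω, v z ≤ φ z) → ∀ z ∈ ω, v z ≤ φ z

open Metric Set Filter Topology

lemma expE_le_exp_iff {x : EReal} (hx : x ≠ ⊤) (t : ℝ) : expE x ≤ Real.exp t ↔ x ≤ t := by
  induction x using EReal.rec with
  | bot => simp [expE, (Real.exp_pos t).le]
  | coe s => simp [expE]
  | top => exact absurd rfl hx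

lemma expE_lt_exp_iff {x : EReal} (hx : x ≠ ⊤) (t : ℝ) : expE x < Real.exp t ↔ x < t := by
  induction x using EReal.rec with
  | bot => simp [expE, Real.exp_pos t]
  | coe s => simp [expE]
  | top => exact absurd rfl hx

lemma expE_pos {x : EReal} (hx : x ≠ ⊥) : 0 < expE x := by
  simp [expE, hx, Real.exp_pos]

lemma EReal.sub_div_le_iff {c : ℝ} (hc : 0 < c) (β : ℝ) (x y : EReal) :
    (x - β) / c ≤ y ↔ x ≤ c * y + β := by
  rw [EReal.div_le_iff_le_mul (EReal.coe_pos.2 hc) (EReal.coe_ne_top c),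
    EReal.sub_le_iff_le_add (.inl (EReal.coe_ne_bot β)) (.inl (EReal.coe_ne_top β))]

lemma EReal.sub_div_lt_iff {c : ℝ} (hc : 0 < c) (β : ℝ) (x y : EReal) :
    (x - β) / c < y ↔ x < c * y + β := by
  rw [EReal.div_lt_iff (EReal.coe_pos.2 hc) (EReal.coe_ne_top c),
    EReal.sub_lt_iff (.inl (EReal.coe_ne_bot β)) (.inl (EReal.coe_ne_top β)), mul_comm]

lemma EReal.le_coe_mul_add_of_forall {x y : EReal} {L C a : ℝ} (hL : 0 ≤ L) (hx : x ≤ a)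
    (h : ∀ t : ℝ, x ≤ t → t ≤ a → y ≤ ((L * t + C : ℝ) : EReal)) : y ≤ L * x + C := by
  induction x using EReal.rec with
  | bot =>
    rcases hL.eq_or_lt with rfl | hL
    · simpa using h a bot_le le_rfl
    · rw [EReal.coe_mul_bot_of_pos hL, EReal.bot_add, le_bot_iff, EReal.eq_bot_iff_forall_lt]
      intro r
      refine (h (min a ((r - 1 - C) / L)) bot_le (min_le_left _ _)).trans_lt ?_
      have : L * min a ((r - 1 - C) / L) ≤ r - 1 - C :=
        (mul_le_mul_of_nonneg_left (min_le_right _ _) hL.le).trans (mul_div_cancel₀ _ hL.ne').le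
      exact_mod_cast (by linarith : L * min a ((r - 1 - C) / L) + C < r)
  | coe s => simpa using h s le_rfl (EReal.coe_le_coe_iff.1 hx)
  | top => exact absurd hx (by simp)

lemma UpperSemicontinuousOn.exists_forall_le_coe {X : Type*} [TopologicalSpace X]
    {f : X → EReal} {K : Set X} (hf : UpperSemicontinuousOn f K) (hK : IsCompact K)
    (hftop : ∀ z ∈ K, f z ≠ ⊤) : ∃ M : ℝ, ∀ z ∈ K, f z ≤ M := by
  rcases K.eq_empty_or_nonempty with rfl | hne
  · exact ⟨0, by simp⟩
  obtain ⟨a, ha, hmax⟩ := hf.exists_isMaxOn hne hK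
  exact ⟨(f a).toReal, fun z hz => (hmax hz).trans (EReal.le_coe_toReal (hftop a ha))⟩

theorem ConvexOn.exists_slope_atBot {f : ℝ → ℝ} {a : ℝ} (hf : ConvexOn ℝ (Iic a) f)
    (hmono : MonotoneOn f (Iic a)) :
    ∃ L, 0 ≤ L ∧ (∀ t ≤ a, f t ≤ L * t + (f a - L * a)) ∧
      ∀ c C T : ℝ, (∀ t ≤ T, f t ≤ c * t + C) → c ≤ L := by
  have hslope : ∀ t < a, slope f a t = (f a - f t) / (a - t) := fun t _ => by
    rw [slope_def_field, ← neg_div_neg_eq, neg_sub, neg_sub]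
  have hnonneg : ∀ t < a, 0 ≤ slope f a t := fun t ht => by
    rw [hslope t ht]
    exact div_nonneg (sub_nonneg.2 (hmono (mem_Iic.2 ht.le) (mem_Iic.2 le_rfl) ht.le))
      (sub_nonneg.2 ht.le)
  have hne : (slope f a '' Iio a).Nonempty := ⟨_, mem_image_of_mem _ (sub_one_lt a)⟩
  have hbdd : BddBelow (slope f a '' Iio a) := ⟨0, forall_mem_image.2 hnonneg⟩
  refine ⟨sInf (slope f a '' Iio a), le_csInf hne (forall_mem_image.2 hnonneg), ?_, ?_⟩
  · intro t ht
    rcases ht.lt_or_eq with ht | rfl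
    · have h := csInf_le hbdd (mem_image_of_mem _ ht)
      rw [hslope t ht, le_div_iff₀ (sub_pos.2 ht)] at h
      linarith
    · exact le_of_eq (by ring)
  · intro c C T hT
    refine le_csInf hne (forall_mem_image.2 fun t' ht' => ?_)
    -- the chord from `a` down to `t` has slope at least `c + (f a - c a - C) / (a - t) → c`
    have hlim : Tendsto (fun t => c + (f a - c * a - C) / (a - t)) atBot (𝓝 c) := by
      have : Tendsto (fun t : ℝ => a - t) atBot atTop :=
        tendsto_atTop_add_const_left _ a tendsto_neg_atBot_atTop
      simpa using tendsto_const_nhds.add (tendsto_const_nhds.div_atTop this)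
    refine le_of_tendsto hlim ((eventually_lt_atBot (min t' T)).mono fun t ht => ?_)
    have hta : t < a := ht.trans_le ((min_le_left _ _).trans ht'.le)
    calc c + (f a - c * a - C) / (a - t) = (f a - (c * t + C)) / (a - t) := by
          field_simp [(sub_pos.2 hta).ne']; ring
      _ ≤ slope f a t := by
          rw [hslope t hta]
          gcongr
          exact hT t (ht.le.trans (min_le_right _ _))
      _ ≤ slope f a t' :=
          hf.slope_mono (mem_Iic.2 le_rfl) ⟨hta.le, hta.ne⟩
            ⟨mem_Iic.2 ht'.le, (mem_Iio.1 ht').ne⟩ (ht.le.trans (min_le_left _ _))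

section PSH

variable {n : ℕ} {u : (Fin n → ℂ) → EReal} {Ω : Set (Fin n → ℂ)}

lemma IsPSHOn.mono {ω : Set (Fin n → ℂ)} (hu : IsPSHOn u Ω) (hω : ω ⊆ Ω) : IsPSHOn u ω :=
  ⟨hu.1.mono hω, fun a ha b hdisk => hu.2 a (hω ha) b fun t ht => hω (hdisk t ht)⟩

lemma IsPSHOn.sub_div (hu : IsPSHOn u Ω) (β : ℝ) {c : ℝ} (hc : 0 < c) :
    IsPSHOn (fun z => (u z - β) / c) Ω := by
  refine ⟨fun x hx y hy => ?_, fun a ha b hdisk Φ hΦ hmaj => ?_⟩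
  · exact (hu.1 x hx _ ((EReal.sub_div_lt_iff hc β _ _).1 hy)).mono
      fun z hz => (EReal.sub_div_lt_iff hc β _ _).2 hz
  · have hmaj' : ∀ θ : ℝ,
        u (a + Complex.exp (θ * Complex.I) • b) ≤ ((c * Φ θ + β : ℝ) : EReal) :=
      fun θ => by exact_mod_cast (EReal.sub_div_le_iff hc β _ _).1 (hmaj θ)
    have h := hu.2 a ha b hdisk _ (by fun_prop) hmaj'
    have hmean : 1 / (2 * Real.pi) * ∫ θ in (0 : ℝ)..2 * Real.pi, (c * Φ θ + β)
        = c * (1 / (2 * Real.pi) * ∫ θ in (0 : ℝ)..2 * Real.pi, Φ θ) + β := by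
      rw [intervalIntegral.integral_add ((hΦ.intervalIntegrable _ _).const_mul c)
        intervalIntegrable_const, intervalIntegral.integral_const_mul,
        intervalIntegral.integral_const, smul_eq_mul]
      field_simp [Real.pi_pos.ne']
      ring
    rw [hmean] at h
    exact (EReal.sub_div_le_iff hc β _ _).2 (by exact_mod_cast h)

/-- The sub-mean value inequality holds against `A - M g` for every `M`, where `A` bounds `u` on
the circle and `g ≥ 0` is a bump supported where `u = -∞`. -/
lemma IsPSHOn.eq_bot_of_eq_bot_near_circle (hu : IsPSHOn u Ω)
    (hutop : ∀ z, u z ≠ ⊤) {c b : Fin n → ℂ} (hdisk : ∀ t : ℂ, ‖t‖ ≤ 1 → c + t • b ∈ Ω)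
    {ε : ℝ} (hε : 0 < ε) (hbot : ∀ z ∈ ball (c + b) ε, u z = ⊥) : u c = ⊥ := by
  set γ : ℝ → Fin n → ℂ := fun θ => c + Complex.exp (θ * Complex.I) • b
  have hdiskK : IsCompact ((fun t : ℂ => c + t • b) '' closedBall 0 1) :=
    (isCompact_closedBall 0 1).image (by fun_prop)
  have hdiskΩ : (fun t : ℂ => c + t • b) '' closedBall 0 1 ⊆ Ω := by
    rintro _ ⟨t, ht, rfl⟩
    exact hdisk t (by simpa using ht)
  obtain ⟨A, hA⟩ := (hu.1.mono hdiskΩ).exists_forall_le_coe hdiskK fun z _ => hutop z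
  set g : ℝ → ℝ := fun θ => max 0 (ε - dist (γ θ) (c + b))
  have hg : Continuous g := by fun_prop
  set J := 1 / (2 * Real.pi) * ∫ θ in (0 : ℝ)..2 * Real.pi, g θ
  have hJ : 0 < J := mul_pos (by positivity) <|
    intervalIntegral.integral_pos Real.two_pi_pos hg.continuousOn (fun _ _ => le_max_left _ _)
      ⟨0, ⟨le_rfl, Real.two_pi_pos.le⟩, by simp [g, γ, hε]⟩
  have hmean : ∀ M : ℝ, u c ≤ ((A - M * J : ℝ) : EReal) := by
    intro M
    have hmaj : ∀ θ : ℝ, u (γ θ) ≤ ((A - M * g θ : ℝ) : EReal) := by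
      intro θ
      rcases (le_max_left 0 (ε - dist (γ θ) (c + b))).eq_or_lt with hg0 | hg0
      · rw [show g θ = 0 from hg0.symm, mul_zero, sub_zero]
        exact hA _ ⟨_, by simp [Complex.norm_exp_ofReal_mul_I], rfl⟩
      · rw [hbot _ (mem_ball.2 (by simpa using (lt_max_iff.1 hg0).resolve_left (lt_irrefl 0)))]
        exact bot_le
    have h := hu.2 c (by simpa using hdisk 0 (by simp)) b hdisk _ (by fun_prop) hmaj
    refine h.trans_eq (congrArg _ ?_)
    rw [intervalIntegral.integral_sub intervalIntegrable_const
      ((hg.intervalIntegrable _ _).const_mul M), intervalIntegral.integral_const_mul,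
      intervalIntegral.integral_const, smul_eq_mul]
    simp only [J]
    field_simp [Real.pi_pos.ne']
    ring
  rw [EReal.eq_bot_iff_forall_lt]
  intro y
  refine (hmean ((A - y + 1) / J)).trans_lt (EReal.coe_lt_coe_iff.2 ?_)
  rw [div_mul_cancel₀ _ hJ.ne']
  linarith

/-- The interior of `{u = -∞}` is closed in `Ω`: every point near it is the centre of a small
circle passing through it. -/
lemma IsPSHOn.eqOn_bot_of_eventually_eq_bot (hΩ : IsOpen Ω) (hΩc : IsPreconnected Ω)
    (hu : IsPSHOn u Ω) (hutop : ∀ z, u z ≠ ⊤) {x : Fin n → ℂ} (hx : x ∈ Ω)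
    (h : ∀ᶠ z in 𝓝 x, u z = ⊥) : ∀ z ∈ Ω, u z = ⊥ := by
  suffices Ω ⊆ interior {z | u z = ⊥} from
    fun z hz => interior_subset (s := {z | u z = ⊥}) (this hz)
  refine hΩc.subset_of_closure_inter_subset isOpen_interior
    ⟨x, hx, mem_interior_iff_mem_nhds.2 h⟩ ?_
  rintro z ⟨hzU, hzΩ⟩
  obtain ⟨r, hr, hrΩ⟩ := Metric.isOpen_iff.1 hΩ z hzΩ
  obtain ⟨w, hwU, hzw⟩ := Metric.mem_closure_iff.1 hzU (r / 3) (by positivity)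
  obtain ⟨ε, hε, hεU⟩ := Metric.isOpen_iff.1 isOpen_interior w hwU
  refine mem_interior_iff_mem_nhds.2
    (Metric.mem_nhds_iff.2 ⟨r / 3, by positivity, fun y hy => ?_⟩)
  refine hu.eq_bot_of_eq_bot_near_circle hutop (b := w - y) (fun t ht => hrΩ ?_) hε
    fun v hv => interior_subset (s := {z | u z = ⊥}) (hεU (by simpa using hv))
  rw [mem_ball] at hy ⊢
  rw [dist_comm] at hzw
  calc dist (y + t • (w - y)) z ≤ dist y z + ‖t‖ * dist w y := by
        rw [dist_eq_norm, dist_eq_norm, dist_eq_norm, ← norm_smul, add_sub_right_comm]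
        exact norm_add_le _ _
    _ ≤ dist y z + (dist w z + dist z y) := by
        gcongr
        exact (mul_le_of_le_one_left dist_nonneg ht).trans (dist_triangle _ _ _)
    _ < r := by rw [dist_comm z y]; linarith

end PSH

section Sublevel

variable {n : ℕ} {R ρ : ℝ} {φ u : (Fin n → ℂ) → EReal}

def sublevel (φ : (Fin n → ℂ) → EReal) (ρ t : ℝ) : Set (Fin n → ℂ) :=
  {z ∈ closedBall 0 ρ | φ z ≤ t}

def shell (φ : (Fin n → ℂ) → EReal) (ρ t₀ t₁ : ℝ) : Set (Fin n → ℂ) :=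
  {z ∈ ball 0 ρ | (t₀ : EReal) < φ z ∧ φ z < t₁}

lemma sublevel_mono {t t' : ℝ} (h : t ≤ t') : sublevel φ ρ t ⊆ sublevel φ ρ t' :=
  fun _ hz => ⟨hz.1, hz.2.trans (EReal.coe_le_coe_iff.2 h)⟩

variable (hρR : ρ < R) (hφtop : ∀ z, φ z ≠ ⊤)
  (hφcont : ContinuousOn (fun z => expE (φ z)) (ball 0 R))
include hρR hφtop hφcont

lemma exists_sublevel_subset_ball (hφsing : ∀ z ∈ ball (0 : Fin n → ℂ) R, z ≠ 0 → φ z ≠ ⊥)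
    {r : ℝ} (hr : 0 < r) : ∃ T : ℝ, sublevel φ ρ T ⊆ ball 0 r := by
  set A := {z ∈ closedBall (0 : Fin n → ℂ) ρ | r ≤ ‖z‖}
  have hAball : A ⊆ ball 0 R := fun z hz => closedBall_subset_ball hρR hz.1
  have hA : IsCompact A :=
    (isCompact_closedBall 0 ρ).of_isClosed_subset
      (isClosed_closedBall.inter (isClosed_le continuous_const continuous_norm)) (sep_subset _ _)
  obtain ⟨m, hm, hmA⟩ := hA.exists_forall_le' (hφcont.mono hAball) fun z hz =>
    expE_pos (hφsing z (hAball hz) (norm_pos_iff.1 (hr.trans_le hz.2)))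
  refine ⟨Real.log (m / 2), fun z hz => mem_ball_zero_iff.2 (not_le.1 fun hrz => ?_)⟩
  have h := (expE_le_exp_iff (hφtop z) _).2 hz.2
  rw [Real.exp_log (half_pos hm)] at h
  linarith [hmA z ⟨hz.1, hrz⟩]

lemma exists_ball_subset_sublevel (hρ : 0 < ρ) (hφ0 : φ 0 = ⊥) (t : ℝ) :
    ∃ δ > 0, ball 0 δ ⊆ sublevel φ ρ t := by
  have hcont : ContinuousAt (fun z => expE (φ z)) 0 :=
    hφcont.continuousAt (isOpen_ball.mem_nhds (mem_ball_self (hρ.trans hρR)))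
  have hlt : expE (φ 0) < Real.exp t := by simpa [hφ0, expE] using Real.exp_pos t
  obtain ⟨δ, hδ, hδt⟩ := Metric.mem_nhds_iff.1 (hcont.eventually (gt_mem_nhds hlt))
  refine ⟨min δ ρ, lt_min hδ hρ, fun z hz => ⟨?_, ?_⟩⟩
  · exact ball_subset_closedBall (ball_subset_ball (min_le_right _ _) hz)
  · exact ((expE_lt_exp_iff (hφtop z) t).1 (hδt (ball_subset_ball (min_le_left _ _) hz))).le

lemma isOpen_shell (t₀ t₁ : ℝ) : IsOpen (shell φ ρ t₀ t₁) := by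
  have h := (hφcont.mono (ball_subset_ball hρR.le)).isOpen_inter_preimage isOpen_ball
    (isOpen_Ioo (a := Real.exp t₀) (b := Real.exp t₁))
  convert h using 1
  ext z
  simp only [shell, mem_sep_iff, mem_inter_iff, mem_preimage, mem_Ioo,
    expE_lt_exp_iff (hφtop z), ← not_le, expE_le_exp_iff (hφtop z)]

lemma closure_shell_subset (t₀ t₁ : ℝ) :
    closure (shell φ ρ t₀ t₁) ⊆ {z ∈ closedBall 0 ρ | (t₀ : EReal) ≤ φ z ∧ φ z ≤ t₁} := by
  refine closure_minimal (fun z hz => ⟨ball_subset_closedBall hz.1, hz.2.1.le, hz.2.2.le⟩) ?_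
  have h := (hφcont.mono (closedBall_subset_ball hρR)).preimage_isClosed_of_isClosed
    isClosed_closedBall (isClosed_Icc (a := Real.exp t₀) (b := Real.exp t₁))
  convert h using 1
  ext z
  simp only [mem_sep_iff, mem_inter_iff, mem_preimage, mem_Icc,
    expE_le_exp_iff (hφtop z), ← not_lt, expE_lt_exp_iff (hφtop z)]

end Sublevel

section SublevelSup

variable {n : ℕ} {R ρ : ℝ} {φ u : (Fin n → ℂ) → EReal} {ℓ : ℝ → ℝ}

lemma exists_isLUB_image_sublevel (hρ : 0 < ρ) (hρR : ρ < R) (hu : IsPSHOn u (ball 0 R))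
    (hutop : ∀ z, u z ≠ ⊤) (hune : ∃ z ∈ ball (0 : Fin n → ℂ) R, u z ≠ ⊥)
    (hφtop : ∀ z, φ z ≠ ⊤) (hφcont : ContinuousOn (fun z => expE (φ z)) (ball 0 R))
    (hφ0 : φ 0 = ⊥) : ∃ ℓ : ℝ → ℝ, ∀ t, IsLUB (u '' sublevel φ ρ t) (ℓ t) := by
  obtain ⟨M, hM⟩ := (hu.1.mono (closedBall_subset_ball hρR)).exists_forall_le_coe
    (isCompact_closedBall 0 ρ) fun z _ => hutop z
  have hne : ∀ t, ∃ z ∈ sublevel φ ρ t, u z ≠ ⊥ := by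
    intro t
    obtain ⟨δ, hδ, hδt⟩ := exists_ball_subset_sublevel hρR hφtop hφcont hρ hφ0 t
    by_contra! h
    obtain ⟨w, hw, hwne⟩ := hune
    exact hwne (hu.eqOn_bot_of_eventually_eq_bot isOpen_ball (convex_ball 0 R).isPreconnected
      hutop (mem_ball_self (hρ.trans hρR)) (eventually_of_mem (ball_mem_nhds 0 hδ)
        fun z hz => h z (hδt hz)) w hw)
  refine ⟨fun t => (sSup (u '' sublevel φ ρ t)).toReal, fun t => ?_⟩
  obtain ⟨z, hz, hzne⟩ := hne t
  rw [EReal.coe_toReal (ne_top_of_le_ne_top (EReal.coe_ne_top M)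
      (sSup_le (forall_mem_image.2 fun z hz => hM z hz.1)))
    (ne_bot_of_le_ne_bot hzne (le_sSup (mem_image_of_mem u hz)))]
  exact isLUB_sSup _

variable (hℓ : ∀ t, IsLUB (u '' sublevel φ ρ t) (ℓ t))
include hℓ

lemma monotone_of_isLUB_image_sublevel : Monotone ℓ := fun _ _ h =>
  EReal.coe_le_coe_iff.1 ((hℓ _).mono (hℓ _) (image_mono (sublevel_mono h)))

lemma le_mul_add_of_isLUB_image_sublevel {L C a : ℝ} (hL : 0 ≤ L)
    (hbound : ∀ t ≤ a, ℓ t ≤ L * t + C) : ∀ z ∈ sublevel φ ρ a, u z ≤ L * φ z + C :=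
  fun _ hz => EReal.le_coe_mul_add_of_forall hL hz.2 fun t hzt hta =>
    ((hℓ t).1 (mem_image_of_mem u ⟨hz.1, hzt⟩)).trans (EReal.coe_le_coe_iff.2 (hbound t hta))

lemma isLUB_image_sublevel_le_of_le_mul_add {c C r T : ℝ} (hc : 0 ≤ c)
    (hT : sublevel φ ρ T ⊆ ball 0 r) (h : ∀ z ∈ ball 0 r, u z ≤ c * φ z + C) :
    ∀ t ≤ T, ℓ t ≤ c * t + C := by
  intro t ht
  refine EReal.coe_le_coe_iff.1 ((hℓ t).2 (forall_mem_image.2 fun z hz => ?_))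
  calc u z ≤ c * φ z + C := h z (hT (sublevel_mono ht hz))
    _ ≤ c * t + C := by gcongr; exact hz.2
    _ = ((c * t + C : ℝ) : EReal) := by norm_cast

end SublevelSup

section Maximal

variable {n : ℕ} {R ρ : ℝ} {φ u : (Fin n → ℂ) → EReal} {ℓ : ℝ → ℝ}
  (hφmax : IsMaximalOn φ (ball (0 : Fin n → ℂ) R \ {0})) (hu : IsPSHOn u (ball 0 R))
  (hρR : ρ < R) (hφtop : ∀ z, φ z ≠ ⊤)
  (hφcont : ContinuousOn (fun z => expE (φ z)) (ball 0 R)) (hφ0 : φ 0 = ⊥)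
include hφmax hu hρR hφtop hφcont hφ0

lemma IsMaximalOn.le_mul_add_on_shell {c β t₀ t₁ : ℝ} (hc : 0 < c)
    (hfr : ∀ z ∈ frontier (shell φ ρ t₀ t₁), u z ≤ c * φ z + β) :
    ∀ z ∈ shell φ ρ t₀ t₁, u z ≤ c * φ z + β := by
  have hcl := closure_shell_subset hρR hφtop hφcont t₀ t₁
  have hclR : closure (shell φ ρ t₀ t₁) ⊆ ball 0 R :=
    fun z hz => closedBall_subset_ball hρR (hcl hz).1
  have hcl0 : closure (shell φ ρ t₀ t₁) ⊆ ball 0 R \ {0} := by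
    refine fun z hz => ⟨hclR hz, fun h0 => ?_⟩
    have := (hcl hz).2.1
    rw [mem_singleton_iff.1 h0, hφ0, le_bot_iff] at this
    exact EReal.coe_ne_bot _ this
  have hv := hu.sub_div β hc
  intro z hz
  exact (EReal.sub_div_le_iff hc β _ _).1 <| hφmax _ (isOpen_shell hρR hφtop hφcont t₀ t₁)
    ((isCompact_closedBall 0 ρ).of_isClosed_subset isClosed_closure fun z hz => (hcl hz).1)
    hcl0 _ (hv.mono (subset_closure.trans hclR)) (hv.1.mono hclR)
    (fun z hz => (EReal.sub_div_le_iff hc β _ _).2 (hfr z hz)) z hz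

variable (hℓ : ∀ t, IsLUB (u '' sublevel φ ρ t) (ℓ t))
include hℓ

lemma le_affine_of_le_affine_at_ends {c β t₀ t t₁ : ℝ} (hc : 0 < c) (ht₀ : t₀ < t)
    (ht₁ : t < t₁) (hT : sublevel φ ρ t₁ ⊆ ball 0 ρ) (h₀ : ℓ t₀ ≤ c * t₀ + β)
    (h₁ : ℓ t₁ ≤ c * t₁ + β) : ℓ t ≤ c * t + β := by
  have hle : ∀ s, ℓ s ≤ c * s + β → ∀ z ∈ sublevel φ ρ s, u z ≤ c * s + β := by
    intro s hs z hz
    have := ((hℓ s).1 (mem_image_of_mem u hz)).trans (EReal.coe_le_coe_iff.2 hs)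
    exact_mod_cast this
  have hfr : ∀ z ∈ frontier (shell φ ρ t₀ t₁), u z ≤ c * φ z + β := by
    intro z hz
    have hzcl := closure_shell_subset hρR hφtop hφcont t₀ t₁ (frontier_subset_closure hz)
    rw [(isOpen_shell hρR hφtop hφcont t₀ t₁).frontier_eq] at hz
    rcases hzcl.2.1.eq_or_lt with h | h
    · rw [← h]
      exact hle t₀ h₀ z ⟨hzcl.1, h.ge⟩
    rcases hzcl.2.2.eq_or_lt with h' | h'
    · rw [h']
      exact hle t₁ h₁ z ⟨hzcl.1, h'.le⟩
    exact absurd ⟨hT ⟨hzcl.1, hzcl.2.2⟩, h, h'⟩ hz.2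
  have hshell := hφmax.le_mul_add_on_shell hu hρR hφtop hφcont hφ0 hc hfr
  refine EReal.coe_le_coe_iff.1 ((hℓ t).2 (forall_mem_image.2 fun z hz => ?_))
  push_cast
  by_cases hz₀ : φ z ≤ t₀
  · refine (hle t₀ h₀ z ⟨hz.1, hz₀⟩).trans ?_
    gcongr
  · refine (hshell z ⟨hT (sublevel_mono ht₁.le hz), not_le.1 hz₀,
      hz.2.trans_lt (EReal.coe_lt_coe_iff.2 ht₁)⟩).trans ?_
    gcongr
    exact hz.2

lemma convexOn_of_isLUB_image_sublevel {T : ℝ} (hT : sublevel φ ρ T ⊆ ball 0 ρ) :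
    ConvexOn ℝ (Iic T) ℓ := by
  refine convexOn_of_slope_mono_adjacent (convex_Iic T) fun {x y z} _ hz hxy hyz => ?_
  have hyx : 0 < y - x := sub_pos.2 hxy
  have hzx : 0 < z - x := sub_pos.2 (hxy.trans hyz)
  set s := (ℓ z - ℓ x) / (z - x)
  have hsz : s * (z - x) = ℓ z - ℓ x := div_mul_cancel₀ _ hzx.ne'
  have hs : 0 ≤ s := div_nonneg
    (sub_nonneg.2 (monotone_of_isLUB_image_sublevel hℓ (hxy.trans hyz).le)) hzx.le
  have hchord : ℓ y ≤ ℓ x + s * (y - x) := by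
    refine le_of_forall_pos_le_add fun ε hε => ?_
    have h := le_affine_of_le_affine_at_ends hφmax hu hρR hφtop hφcont hφ0 hℓ
      (c := s + ε / (y - x)) (β := ℓ x - (s + ε / (y - x)) * x) (by positivity) hxy hyz
      ((sublevel_mono hz).trans hT) (by linarith) (by nlinarith [div_pos hε hyx])
    have heq :
        (s + ε / (y - x)) * y + (ℓ x - (s + ε / (y - x)) * x) = ℓ x + s * (y - x) + ε := by
      field_simp
      ring
    linarith
  calc (ℓ y - ℓ x) / (y - x) ≤ s := (div_le_iff₀ hyx).2 (by linarith)
    _ ≤ (ℓ z - ℓ y) / (z - y) := (le_div_iff₀ (sub_pos.2 hyz)).2 (by linarith)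

end Maximal

theorem stmt_13_general (n : ℕ) (R : ℝ)
    (u φ : (Fin n → ℂ) → EReal)
    (hu : IsPSHOn u (Metric.ball 0 R))
    (hutop : ∀ z, u z ≠ ⊤)
    (hune : ∃ z ∈ Metric.ball (0 : Fin n → ℂ) R, u z ≠ ⊥)
    (hφtop : ∀ z, φ z ≠ ⊤)
    -- isolated singularity at the origin :
    (hφ0 : φ 0 = ⊥)
    (hφsing : ∀ z ∈ Metric.ball (0 : Fin n → ℂ) R, z ≠ 0 → φ z ≠ ⊥)
    -- `e^φ` is continuous :
    (hφcont : ContinuousOn (fun z => expE (φ z)) (Metric.ball 0 R))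
    -- maximality outside the origin :
    (hφmax : IsMaximalOn φ (Metric.ball (0 : Fin n → ℂ) R \ {0})) :
    ∃ L : ℝ, 0 ≤ L ∧
      IsLUB {c : ℝ | 0 ≤ c ∧ ∃ C r : ℝ, 0 < r ∧ r ≤ R ∧
        ∀ z ∈ Metric.ball (0 : Fin n → ℂ) r,
          u z ≤ ((c : ℝ) : EReal) * φ z + ((C : ℝ) : EReal)} L ∧
      ∃ C r : ℝ, 0 < r ∧ r ≤ R ∧
        ∀ z ∈ Metric.ball (0 : Fin n → ℂ) r,
          u z ≤ ((L : ℝ) : EReal) * φ z + ((C : ℝ) : EReal) := by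
  have hR : 0 < R := by
    obtain ⟨z, hz, -⟩ := hune
    exact dist_nonneg.trans_lt hz
  have hρ : 0 < R / 2 := half_pos hR
  have hρR : R / 2 < R := half_lt_self hR
  obtain ⟨ℓ, hℓ⟩ := exists_isLUB_image_sublevel hρ hρR hu hutop hune hφtop hφcont hφ0
  obtain ⟨T, hT⟩ := exists_sublevel_subset_ball hρR hφtop hφcont hφsing hρ
  obtain ⟨L, hL, hLℓ, hLmin⟩ :=
    (convexOn_of_isLUB_image_sublevel hφmax hu hρR hφtop hφcont hφ0 hℓ hT).exists_slope_atBot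
      ((monotone_of_isLUB_image_sublevel hℓ).monotoneOn _)
  obtain ⟨δ, hδ, hδT⟩ := exists_ball_subset_sublevel hρR hφtop hφcont hρ hφ0 T
  have hattain : ∀ z ∈ ball (0 : Fin n → ℂ) (min δ R), u z ≤ L * φ z + (ℓ T - L * T) :=
    fun z hz => le_mul_add_of_isLUB_image_sublevel hℓ hL hLℓ z
      (hδT (ball_subset_ball (min_le_left _ _) hz))
  refine ⟨L, hL, ⟨?_, fun b hb => hb ⟨hL, _, _, lt_min hδ hR, min_le_right _ _, hattain⟩⟩,
    _, _, lt_min hδ hR, min_le_right _ _, hattain⟩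
  rintro c ⟨hc, C, r, hr, -, hcr⟩
  obtain ⟨T', hT'⟩ := exists_sublevel_subset_ball hρR hφtop hφcont hφsing hr
  exact hLmin c C T' (isLUB_image_sublevel_le_of_le_mul_add hℓ hc hT' hcr)

/-- for a psh germ `u` (not identically `-∞`) and a maximal psh
weight `φ` (isolated singularity at `0`, `e^φ` continuous, maximal outside the
origin, i.e. `(dd^c φ)^n = λ δ₀`), the relative type
`σ(u,φ) = sup { c ≥ 0 : u ≤ c φ + O(1) }` is finite and the supremum is
attained: `u ≤ σ(u,φ) φ + O(1)`. -/
theorem stmt_13 (n : ℕ) (hn : 0 < n) (R : ℝ) (hR : 0 < R)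
    (u φ : (Fin n → ℂ) → EReal)
    (hu : IsPSHOn u (Metric.ball 0 R))
    (hutop : ∀ z, u z ≠ ⊤)
    (hune : ∃ z ∈ Metric.ball (0 : Fin n → ℂ) R, u z ≠ ⊥)
    (hφ : IsPSHOn φ (Metric.ball 0 R))
    (hφtop : ∀ z, φ z ≠ ⊤)
    -- isolated singularity at the origin :
    (hφ0 : φ 0 = ⊥)
    (hφsing : ∀ z ∈ Metric.ball (0 : Fin n → ℂ) R, z ≠ 0 → φ z ≠ ⊥)
    -- `e^φ` is continuous :
    (hφcont : ContinuousOn (fun z => expE (φ z)) (Metric.ball 0 R))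
    -- maximality outside the origin :
    (hφmax : IsMaximalOn φ (Metric.ball (0 : Fin n → ℂ) R \ {0})) :
    ∃ L : ℝ, 0 ≤ L ∧
      IsLUB {c : ℝ | 0 ≤ c ∧ ∃ C r : ℝ, 0 < r ∧ r ≤ R ∧
        ∀ z ∈ Metric.ball (0 : Fin n → ℂ) r,
          u z ≤ ((c : ℝ) : EReal) * φ z + ((C : ℝ) : EReal)} L ∧
      ∃ C r : ℝ, 0 < r ∧ r ≤ R ∧
        ∀ z ∈ Metric.ball (0 : Fin n → ℂ) r,
          u z ≤ ((L : ℝ) : EReal) * φ z + ((C : ℝ) : EReal) :=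
  stmt_13_general n R u φ hu hutop hune hφtop hφ0 hφsing hφcont hφmax
end

section
/- Let $\varphi$ be a psh germ at $0 \in \mathbb{C}^n$ such that $e^\varphi$ is $\alpha$-Hölder continuous for some $\alpha > 0$. Suppose for every $p$ near $0$ and small $r > 0$ one has the estimate $\frac{1}{k}\mathcal{R}(k\varphi)(p) \le \sup_{B(p,r)}\varphi - \frac{n}{k}\log r + C$ with a uniform constant $C$. Then choosing $r = e^{\varphi(p)/\alpha}$ yields $\sup_{B(p,r)}\varphi \le \varphi(p) + O(1)$, and hence $\frac{1}{k}\mathcal{R}(k\varphi) \le (1 - \tfrac{n}{\alpha k})\varphi + O(1)$ with constant independent of $k$; i.e. $\varphi$ is tame with constant $C = n/\alpha$. -/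
open Metric

lemma expE_nonneg (x : EReal) : 0 ≤ expE x := by
  unfold expE; split
  · exact le_refl 0
  · exact (Real.exp_pos _).le

lemma expE_bot : expE ⊥ = 0 := by simp [expE]

lemma ereal_eq_bot_of_forall {x : EReal} (h : ∀ M : ℝ, x ≤ (M : EReal)) : x = ⊥ := by
  induction x using EReal.rec with
  | bot => rfl
  | coe y => have := EReal.coe_le_coe_iff.mp (h (y - 1)); linarith
  | top => simpa using h 0

lemma le_log_of_expE_le {x : EReal} (hxt : x ≠ ⊤) {B : ℝ} (hB : 0 < B)
    (h : expE x ≤ B) : x ≤ ((Real.log B : ℝ) : EReal) := by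
  rcases eq_or_ne x ⊥ with hb | hb
  · simp [hb]
  · rw [← EReal.coe_toReal hxt hb]
    apply EReal.coe_le_coe_iff.mpr
    have hx : Real.exp x.toReal ≤ B := by
      unfold expE at h; rwa [if_neg hb] at h
    calc x.toReal = Real.log (Real.exp x.toReal) := (Real.log_exp _).symm
      _ ≤ Real.log B := Real.log_le_log (Real.exp_pos _) hx

/-- let `φ ≤ 0` be a psh germ at `0 ∈ ℂⁿ` with `e^φ` α-Hölder,
and let `ψ k` stand for the Demailly approximants `(1/k)𝓡(kφ)`, assumed to
satisfy the Ohsawa–Takegoshi type estimate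
`ψ k p ≤ sup_{B(p,r)} φ + C - (n/k) log r`. Then, choosing `r = e^{φ(p)/α}`,
one gets `sup_{B(p,r)} φ ≤ φ(p) + O(1)`, and hence
`ψ k ≤ (1 - n/(αk)) φ + O(1)` with a constant independent of `k`; i.e. `φ` is
tame with constant `n/α`. -/
theorem stmt_15 (n : ℕ) (α R : ℝ) (hα : 0 < α) (hR : 0 < R)
    (φ : (Fin n → ℂ) → EReal)
    (hneg : ∀ z ∈ ball (0 : Fin n → ℂ) R, φ z ≤ 0)
    -- `e^φ` is α-Hölder on the ball:
    (C' : ℝ) (hC' : 0 ≤ C')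
    (hHol : ∀ z ∈ ball (0 : Fin n → ℂ) R, ∀ w ∈ ball (0 : Fin n → ℂ) R,
      |expE (φ z) - expE (φ w)| ≤ C' * ‖z - w‖ ^ α)
    -- the Demailly approximants and the basic estimate they satisfy:
    (ψ : ℕ → (Fin n → ℂ) → EReal) (C : ℝ)
    (hest : ∀ k : ℕ, 1 ≤ k → ∀ p ∈ ball (0 : Fin n → ℂ) (R / 2),
      ∀ r : ℝ, 0 < r → r < R / 2 →
        ψ k p ≤ (⨆ z ∈ ball p r, φ z) +
          ((C - ((n : ℝ) / k) * Real.log r : ℝ) : EReal)) :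
    ∃ C'' : ℝ,
      (∀ p ∈ ball (0 : Fin n → ℂ) (R / 2),
        (⨆ z ∈ ball p (expE (φ p) ^ (α⁻¹)) ∩ ball (0 : Fin n → ℂ) R, φ z) ≤
          φ p + ((C'' : ℝ) : EReal)) ∧
      (∀ p ∈ ball (0 : Fin n → ℂ) (R / 2), ∀ k : ℕ, (n : ℝ) / α < k →
        ψ k p ≤ ((1 - (n : ℝ) / (α * k) : ℝ) : EReal) * φ p + ((C'' : ℝ) : EReal)) := by
  set L : ℝ := Real.log (1 + C') with hLdef
  have h1C : (0:ℝ) < 1 + C' := by linarith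
  have hL : 0 ≤ L := Real.log_nonneg (by linarith)
  set l : ℝ := |Real.log (R / 4)| with hldef
  have hl : 0 ≤ l := abs_nonneg _
  refine ⟨L + |C| + α * l, ?_, ?_⟩
  -- key lemma: Hölder transfer
  · -- Part 1
    have key : ∀ p ∈ ball (0 : Fin n → ℂ) R, ∀ z ∈ ball (0 : Fin n → ℂ) R,
        ‖z - p‖ ^ α ≤ expE (φ p) → φ z ≤ φ p + (L : EReal) := by
      intro p hp z hz hle
      have hE : expE (φ z) ≤ expE (φ p) + C' * ‖z - p‖ ^ α := by
        have h1 := hHol z hz p hp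
        have h2 := abs_sub_le_iff.mp h1
        linarith [h2.1]
      have hE2 : expE (φ z) ≤ (1 + C') * expE (φ p) := by
        have := mul_le_mul_of_nonneg_left hle hC'
        nlinarith [expE_nonneg (φ p)]
      rcases eq_or_ne (φ z) ⊥ with hb | hb
      · simp [hb]
      · have hzt : φ z ≠ ⊤ := fun h => by
          have := hneg z hz; rw [h] at this; exact absurd this (by simp)
        have hppos : 0 < expE (φ p) := by
          by_contra h
          push_neg at h
          have h0 : expE (φ p) = 0 := le_antisymm h (expE_nonneg _)
          rw [h0, mul_zero] at hE2
          have : 0 < expE (φ z) := by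
            unfold expE; rw [if_neg hb]; exact Real.exp_pos _
          linarith
        have hpb : φ p ≠ ⊥ := by
          intro h; rw [h, expE_bot] at hppos; exact lt_irrefl _ hppos
        have hpt : φ p ≠ ⊤ := fun h => by
          have := hneg p hp; rw [h] at this; exact absurd this (by simp)
        have hlog : φ z ≤ ((Real.log ((1 + C') * expE (φ p)) : ℝ) : EReal) :=
          le_log_of_expE_le hzt (by positivity) hE2
        have hexpEp : expE (φ p) = Real.exp (φ p).toReal := by
          unfold expE; rw [if_neg hpb]
        have : Real.log ((1 + C') * expE (φ p)) = (φ p).toReal + L := by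
          rw [hexpEp, Real.log_mul (ne_of_gt h1C) (Real.exp_ne_zero _), Real.log_exp]
          ring
        rw [this] at hlog
        calc φ z ≤ (((φ p).toReal + L : ℝ) : EReal) := hlog
          _ = ((φ p).toReal : EReal) + (L : EReal) := by rw [EReal.coe_add]
          _ = φ p + (L : EReal) := by rw [EReal.coe_toReal hpt hpb]
    intro p hp
    have hp' : p ∈ ball (0 : Fin n → ℂ) R := by
      have := mem_ball.mp hp; exact mem_ball.mpr (lt_of_lt_of_le this (by linarith))
    apply iSup₂_le
    intro z hz
    obtain ⟨hz1, hz2⟩ := hz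
    have hd : ‖z - p‖ < expE (φ p) ^ (α⁻¹) := by
      rw [← dist_eq_norm]; exact mem_ball.mp hz1
    have hrpow : ‖z - p‖ ^ α ≤ expE (φ p) := by
      calc ‖z - p‖ ^ α ≤ (expE (φ p) ^ (α⁻¹)) ^ α :=
            Real.rpow_le_rpow (norm_nonneg _) hd.le hα.le
        _ = expE (φ p) := Real.rpow_inv_rpow (expE_nonneg _) hα.ne'
    have := key p hp' z hz2 hrpow
    refine this.trans (add_le_add le_rfl (EReal.coe_le_coe_iff.mpr ?_))
    nlinarith [abs_nonneg C, mul_nonneg hα.le hl]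
  · -- Part 2
    have key : ∀ p ∈ ball (0 : Fin n → ℂ) R, ∀ z ∈ ball (0 : Fin n → ℂ) R,
        ‖z - p‖ ^ α ≤ expE (φ p) → φ z ≤ φ p + (L : EReal) := by
      intro p hp z hz hle
      have hE : expE (φ z) ≤ expE (φ p) + C' * ‖z - p‖ ^ α := by
        have h1 := hHol z hz p hp
        have h2 := abs_sub_le_iff.mp h1
        linarith [h2.1]
      have hE2 : expE (φ z) ≤ (1 + C') * expE (φ p) := by
        have := mul_le_mul_of_nonneg_left hle hC'
        nlinarith [expE_nonneg (φ p)]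
      rcases eq_or_ne (φ z) ⊥ with hb | hb
      · simp [hb]
      · have hzt : φ z ≠ ⊤ := fun h => by
          have := hneg z hz; rw [h] at this; exact absurd this (by simp)
        have hppos : 0 < expE (φ p) := by
          by_contra h
          push_neg at h
          have h0 : expE (φ p) = 0 := le_antisymm h (expE_nonneg _)
          rw [h0, mul_zero] at hE2
          have : 0 < expE (φ z) := by
            unfold expE; rw [if_neg hb]; exact Real.exp_pos _
          linarith
        have hpb : φ p ≠ ⊥ := by
          intro h; rw [h, expE_bot] at hppos; exact lt_irrefl _ hppos
        have hpt : φ p ≠ ⊤ := fun h => by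
          have := hneg p hp; rw [h] at this; exact absurd this (by simp)
        have hlog : φ z ≤ ((Real.log ((1 + C') * expE (φ p)) : ℝ) : EReal) :=
          le_log_of_expE_le hzt (by positivity) hE2
        have hexpEp : expE (φ p) = Real.exp (φ p).toReal := by
          unfold expE; rw [if_neg hpb]
        have : Real.log ((1 + C') * expE (φ p)) = (φ p).toReal + L := by
          rw [hexpEp, Real.log_mul (ne_of_gt h1C) (Real.exp_ne_zero _), Real.log_exp]
          ring
        rw [this] at hlog
        calc φ z ≤ (((φ p).toReal + L : ℝ) : EReal) := hlog
          _ = ((φ p).toReal : EReal) + (L : EReal) := by rw [EReal.coe_add]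
          _ = φ p + (L : EReal) := by rw [EReal.coe_toReal hpt hpb]
    intro p hp k hk
    have hp' : p ∈ ball (0 : Fin n → ℂ) R := by
      have := mem_ball.mp hp; exact mem_ball.mpr (lt_of_lt_of_le this (by linarith))
    have hkR : (0:ℝ) < k := lt_of_le_of_lt (div_nonneg (Nat.cast_nonneg n) hα.le) hk
    have hk1 : 1 ≤ k := Nat.one_le_iff_ne_zero.mpr (by
      intro h; rw [h] at hkR; simp at hkR)
    have hnlt : (n : ℝ) < α * k := by
      have := (div_lt_iff₀ hα).mp hk
      linarith [this]
    have hnk : (n : ℝ) / k < α := (div_lt_iff₀ hkR).mpr (by linarith)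
    have hnk0 : (0:ℝ) ≤ (n : ℝ) / k := div_nonneg (Nat.cast_nonneg n) hkR.le
    have hcpos : (0:ℝ) < 1 - (n : ℝ) / (α * k) := by
      have : (n : ℝ) / (α * k) < 1 := (div_lt_one (by positivity)).mpr hnlt
      linarith
    have hball : ∀ r : ℝ, r ≤ R / 4 → ∀ z ∈ ball p r, z ∈ ball (0 : Fin n → ℂ) R := by
      intro r hr z hz
      have h1 : dist z p < r := mem_ball.mp hz
      have h2 : dist p 0 < R / 2 := mem_ball.mp hp
      have := dist_triangle z p 0
      exact mem_ball.mpr (by linarith)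
    rcases eq_or_ne (φ p) ⊥ with hb | hb
    · -- bottom case: show ψ k p = ⊥
      have hbot : ψ k p = ⊥ := by
        apply ereal_eq_bot_of_forall
        intro M
        set a : ℝ := α - (n : ℝ) / k with hadef
        have ha : 0 < a := by simp only [hadef]; linarith
        set r : ℝ := min (Real.exp ((M - C - L) / a)) (R / 4) with hrdef
        have hr0 : 0 < r := lt_min (Real.exp_pos _) (by linarith)
        have hrR : r < R / 2 := lt_of_le_of_lt (min_le_right _ _) (by linarith)
        have hsup : (⨆ z ∈ ball p r, φ z) ≤ ((L + α * Real.log r : ℝ) : EReal) := by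
          apply iSup₂_le
          intro z hz
          have hzR := hball r (min_le_right _ _) z hz
          have hzt : φ z ≠ ⊤ := fun h => by
            have := hneg z hzR; rw [h] at this; exact absurd this (by simp)
          have hE : expE (φ z) ≤ expE (φ p) + C' * ‖z - p‖ ^ α := by
            have h1 := hHol z hzR p hp'
            have h2 := abs_sub_le_iff.mp h1
            linarith [h2.1]
          have hEp : expE (φ p) = 0 := by rw [hb, expE_bot]
          have hzd : ‖z - p‖ ^ α ≤ r ^ α := by
            apply Real.rpow_le_rpow (norm_nonneg _) _ hα.le
            rw [← dist_eq_norm]; exact (mem_ball.mp hz).le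
          have hrpos : (0:ℝ) < r ^ α := Real.rpow_pos_of_pos hr0 _
          have hE2 : expE (φ z) ≤ (1 + C') * r ^ α := by
            have := mul_le_mul_of_nonneg_left hzd hC'
            nlinarith
          have := le_log_of_expE_le hzt (by positivity) hE2
          refine this.trans (EReal.coe_le_coe_iff.mpr ?_)
          rw [Real.log_mul (ne_of_gt h1C) (ne_of_gt hrpos), Real.log_rpow hr0]
        have hlogr : a * Real.log r ≤ M - C - L := by
          have h1 : r ≤ Real.exp ((M - C - L) / a) := min_le_left _ _
          have h2 : Real.log r ≤ (M - C - L) / a := by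
            calc Real.log r ≤ Real.log (Real.exp ((M - C - L) / a)) :=
                  Real.log_le_log hr0 h1
              _ = (M - C - L) / a := Real.log_exp _
          calc a * Real.log r ≤ a * ((M - C - L) / a) :=
                mul_le_mul_of_nonneg_left h2 ha.le
            _ = M - C - L := by field_simp
        calc ψ k p ≤ (⨆ z ∈ ball p r, φ z) +
              ((C - ((n : ℝ) / k) * Real.log r : ℝ) : EReal) :=
              hest k hk1 p hp r hr0 hrR
          _ ≤ ((L + α * Real.log r : ℝ) : EReal) +
              ((C - ((n : ℝ) / k) * Real.log r : ℝ) : EReal) :=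
              add_le_add hsup le_rfl
          _ = (((L + α * Real.log r) + (C - ((n : ℝ) / k) * Real.log r) : ℝ) : EReal) :=
              (EReal.coe_add _ _).symm
          _ ≤ (M : EReal) := by
              apply EReal.coe_le_coe_iff.mpr
              have : (L + α * Real.log r) + (C - ((n : ℝ) / k) * Real.log r)
                  = L + C + a * Real.log r := by simp only [hadef]; ring
              rw [this]; linarith
      rw [hbot, hb, EReal.coe_mul_bot_of_pos hcpos, EReal.bot_add]
    · -- finite case
      have hpt : φ p ≠ ⊤ := fun h => by
        have := hneg p hp'; rw [h] at this; exact absurd this (by simp)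
      set x : ℝ := (φ p).toReal with hxdef
      have hpx : φ p = ((x : ℝ) : EReal) := (EReal.coe_toReal hpt hb).symm
      have hx0 : x ≤ 0 := by
        have := hneg p hp'
        rw [hpx] at this
        exact_mod_cast this
      set r : ℝ := min (Real.exp (x / α)) (R / 4) with hrdef
      have hr0 : 0 < r := lt_min (Real.exp_pos _) (by linarith)
      have hrR : r < R / 2 := lt_of_le_of_lt (min_le_right _ _) (by linarith)
      have hsup : (⨆ z ∈ ball p r, φ z) ≤ ((x + L : ℝ) : EReal) := by
        apply iSup₂_le
        intro z hz
        have hzR := hball r (min_le_right _ _) z hz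
        have hrpow : ‖z - p‖ ^ α ≤ expE (φ p) := by
          have hzd : ‖z - p‖ ^ α ≤ r ^ α := by
            apply Real.rpow_le_rpow (norm_nonneg _) _ hα.le
            rw [← dist_eq_norm]; exact (mem_ball.mp hz).le
          have hr1 : r ^ α ≤ (Real.exp (x / α)) ^ α :=
            Real.rpow_le_rpow hr0.le (min_le_left _ _) hα.le
          have hr2 : (Real.exp (x / α)) ^ α = Real.exp x := by
            rw [← Real.exp_mul, div_mul_cancel₀ _ hα.ne']
          have hEp : expE (φ p) = Real.exp x := by
            unfold expE; rw [if_neg hb]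
          rw [hEp]; rw [hr2] at hr1; linarith
        have := key p hp' z hzR hrpow
        rw [hpx] at this
        calc φ z ≤ ((x : ℝ) : EReal) + (L : EReal) := this
          _ = ((x + L : ℝ) : EReal) := by rw [EReal.coe_add]
      have hlogr : x / α - l ≤ Real.log r := by
        have hxα : x / α ≤ 0 := div_nonpos_of_nonpos_of_nonneg hx0 hα.le
        rcases le_total (Real.exp (x / α)) (R / 4) with h | h
        · rw [hrdef, min_eq_left h, Real.log_exp]; linarith
        · rw [hrdef, min_eq_right h]
          have := neg_abs_le (Real.log (R / 4))
          linarith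
      -- main real computation
      have hmain : (x + L) + (C - ((n : ℝ) / k) * Real.log r)
          ≤ (1 - (n : ℝ) / (α * k)) * x + (L + |C| + α * l) := by
        have h1 : -(((n : ℝ) / k) * Real.log r) ≤ ((n : ℝ) / k) * (l - x / α) := by
          have h0 : -Real.log r ≤ l - x / α := by linarith
          have := mul_le_mul_of_nonneg_left h0 hnk0
          calc -(((n : ℝ) / k) * Real.log r) = ((n : ℝ) / k) * (-Real.log r) := by ring
            _ ≤ ((n : ℝ) / k) * (l - x / α) := this
        have h2 : ((n : ℝ) / k) * l ≤ α * l := mul_le_mul_of_nonneg_right hnk.le hl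
        have h3 : ((n : ℝ) / k) * (x / α) = ((n : ℝ) / (α * k)) * x := by
          rw [div_mul_div_comm, div_mul_eq_mul_div, mul_comm (k:ℝ) α]
        have h4 : ((n : ℝ) / k) * (l - x / α)
            = ((n : ℝ) / k) * l - ((n : ℝ) / (α * k)) * x := by
          rw [mul_sub, h3]
        have h5 : C ≤ |C| := le_abs_self C
        nlinarith [h1, h2, h4, h5]
      calc ψ k p ≤ (⨆ z ∈ ball p r, φ z) +
            ((C - ((n : ℝ) / k) * Real.log r : ℝ) : EReal) :=
            hest k hk1 p hp r hr0 hrR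
        _ ≤ ((x + L : ℝ) : EReal) + ((C - ((n : ℝ) / k) * Real.log r : ℝ) : EReal) :=
            add_le_add hsup le_rfl
        _ = (((x + L) + (C - ((n : ℝ) / k) * Real.log r) : ℝ) : EReal) :=
            (EReal.coe_add _ _).symm
        _ ≤ (((1 - (n : ℝ) / (α * k)) * x + (L + |C| + α * l) : ℝ) : EReal) :=
            EReal.coe_le_coe_iff.mpr hmain
        _ = ((1 - (n : ℝ) / (α * k) : ℝ) : EReal) * φ p + ((L + |C| + α * l : ℝ) : EReal) := by
            rw [hpx, EReal.coe_add, EReal.coe_mul]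
end
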